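/- Let G be a finite group, K a Carter subgroup, z ∈ Z(K) nontrivial, with Carter subgroups of C_G(z) conjugate in C_G(z). Then z is not conjugate in G to any power z^k with z^k ≠ z. -/

import Mathlib

/-!
Since `z^k = x⁻¹ z x`, the centralizer `C = C_G(z)` is contained in `C_G(z^k) = x⁻¹ C x`, and the
two have the same order, so `x` normalizes `C`. Both `K` and `x K x⁻¹` are Carter subgroups of `C`,
hence conjugate in `C`, and the Frattini argument gives `x ∈ C · N_G(K) = C · K`. Every element of
`C · K` centralizes `z`, so `z^k = x⁻¹ z x = z`.
-/

open Pointwise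

/-- A Carter subgroup: a nilpotent self-normalizing subgroup. -/
def IsCarter {G : Type*} [Group G] (H : Subgroup G) : Prop :=
  Group.IsNilpotent H ∧ Subgroup.normalizer (H : Set G) = H

open Subgroup

section

variable {G : Type*} [Group G]

lemma Subgroup.conj_smul_centralizer_singleton (x z : G) :
    MulAut.conj x • centralizer {z} = centralizer {x * z * x⁻¹} := by
  ext g
  simp only [mem_pointwise_smul_iff_inv_smul_mem, mem_centralizer_singleton_iff, MulAut.smul_def,
    MulAut.conj_inv_apply]
  rw [show g * (x * z * x⁻¹) = x * (x⁻¹ * g * x * z) * x⁻¹ by group,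
    show x * z * x⁻¹ * g = x * (z * (x⁻¹ * g * x)) * x⁻¹ by group, mul_left_inj, mul_right_inj]

lemma Subgroup.mem_normalizer_of_le_conj_smul [Finite G] {H : Subgroup G} {x : G}
    (h : H ≤ MulAut.conj x • H) : x ∈ normalizer (H : Set G) :=
  mem_normalizer_iff_map_conj_eq.mpr
    (eq_of_le_of_card_ge h (Nat.card_congr (equivSMul _ H).toEquiv).ge).symm

namespace IsCarter

variable {H : Subgroup G}

lemma subgroupOf (hH : IsCarter H) {C : Subgroup G} (hHC : H ≤ C) :
    IsCarter (H.subgroupOf C) :=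
  ⟨@Group.nilpotent_of_mulEquiv _ _ _ _ hH.1 (subgroupOfEquivOfLe hHC).symm,
    by rw [← subgroupOf_normalizer_eq hHC, hH.2]⟩

lemma conj_smul (hH : IsCarter H) (x : G) : IsCarter (MulAut.conj x • H) :=
  ⟨@Group.nilpotent_of_mulEquiv _ _ _ _ hH.1 (equivSMul _ H),
    by have := map_equiv_normalizer_eq H (MulAut.conj x); rw [hH.2] at this; exact this.symm⟩

lemma normalizer_subset_mul (hH : IsCarter H) {C : Subgroup G} (hHC : H ≤ C)
    (hconj : ∀ K₁ K₂ : Subgroup C, IsCarter K₁ → IsCarter K₂ →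
      ∃ c : C, MulAut.conj c • K₁ = K₂) :
    (normalizer (C : Set G) : Set G) ⊆ (C : Set G) * H := by
  intro x hx
  have hxC : MulAut.conj x • C = C := mem_normalizer_iff_map_conj_eq.mp hx
  have hxHC : MulAut.conj x • H ≤ C := hxC ▸ pointwise_smul_le_pointwise_smul_iff.mpr hHC
  obtain ⟨c, hc⟩ := hconj _ _ ((hH.conj_smul x).subgroupOf hxHC) (hH.subgroupOf hHC)
  rw [conj_smul_subgroupOf hxHC, subgroupOf_inj, inf_of_le_left (conj_smul_le_of_le hxHC c),
    inf_of_le_left hHC, smul_smul, ← map_mul] at hc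
  have hcx : (c : G) * x ∈ H := hH.2 ▸ mem_normalizer_iff_map_conj_eq.mpr hc
  exact ⟨c⁻¹, inv_mem c.2, c * x, hcx, by group⟩

end IsCarter

end

theorem not_conjugate_to_distinct_power_general {G : Type*} [Group G] [Finite G]
    (K : Subgroup G) (hK : IsCarter K) (z : G)
    (hzc : ∀ k ∈ K, k * z = z * k)
    (hconj : ∀ K₁ K₂ : Subgroup (Subgroup.centralizer {z} : Subgroup G),
      IsCarter K₁ → IsCarter K₂ →
        ∃ c : (Subgroup.centralizer {z} : Subgroup G), MulAut.conj c • K₁ = K₂) :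
    ∀ (k : ℕ) (x : G), x⁻¹ * z * x = z ^ k → z ^ k = z := by
  intro k x hx
  have hKC : K ≤ centralizer {z} := fun g hg ↦ mem_centralizer_singleton_iff.mpr (hzc g hg)
  have hxC : x⁻¹ ∈ normalizer (centralizer {z} : Set G) := by
    refine mem_normalizer_of_le_conj_smul fun g hg ↦ ?_
    rw [conj_smul_centralizer_singleton, inv_inv, hx, mem_centralizer_singleton_iff]
    exact (Commute.pow_right (mem_centralizer_singleton_iff.mp hg) k).eq
  obtain ⟨c, hc, h, hh, hch⟩ := hK.normalizer_subset_mul hKC hconj (inv_mem hxC)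
  rw [inv_inv] at hch
  subst hch
  have hxz : Commute (c * h) z :=
    Commute.mul_left (mem_centralizer_singleton_iff.mp hc) (hzc h hh)
  rw [← hx, mul_assoc, ← hxz.eq, inv_mul_cancel_left]

theorem not_conjugate_to_distinct_power {G : Type*} [Group G] [Finite G]
    (K : Subgroup G) (hK : IsCarter K) (z : G) (hz : z ≠ 1)
    (hzK : z ∈ K) (hzc : ∀ k ∈ K, k * z = z * k)
    (hconj : ∀ K₁ K₂ : Subgroup (Subgroup.centralizer {z} : Subgroup G),
      IsCarter K₁ → IsCarter K₂ →
        ∃ c : (Subgroup.centralizer {z} : Subgroup G), MulAut.conj c • K₁ = K₂) :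
    ∀ (k : ℕ) (x : G), x⁻¹ * z * x = z ^ k → z ^ k = z :=
  not_conjugate_to_distinct_power_general K hK z hzc hconj
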